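/- arXiv:0901.4933 — 3 statements merged into one kernel-verified Lean document; each statement's English description precedes it below -/
import Mathlib

section
/- In a cubic algebra, if p ≼ q (i.e., Δ(p∨q, p) ≤ q) and the meet p∧q exists, then p ≤ q. -/
namespace CubicPaper

/-- Existence of the binary meet of `a` and `b`. -/
def MeetExists {L : Type*} [SemilatticeSup L] (a b : L) : Prop :=
  ∃ m : L, IsGLB ({a, b} : Set L) m

/-- A cubic algebra: join semilattice with top `⊤` and a (totalized) binary
operation `delta`, whose axioms are only assumed where the paper defines them. -/
structure CubicAlgebra (L : Type*) [SemilatticeSup L] [OrderTop L] where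
  delta : L → L → L
  op : L → L → L
  op_def : ∀ x y : L, op x y = delta ⊤ (delta (x ⊔ y) y) ⊔ y
  ax_a : ∀ x y : L, x ≤ y → delta y x ⊔ x = y
  ax_b : ∀ x y z : L, x ≤ y → y ≤ z →
    delta z (delta y x) = delta (delta z y) (delta z x)
  ax_c : ∀ x y : L, x ≤ y → delta y (delta y x) = x
  ax_d : ∀ x y z : L, x ≤ y → y ≤ z → delta z x ≤ delta z y
  ax_e : ∀ x y : L, op (op x y) y = x ⊔ y
  ax_f : ∀ x y z : L, op x (op y z) = op y (op x z)

namespace CubicAlgebra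

variable {L : Type*} [SemilatticeSup L] [OrderTop L]

/-- `a ≼ b` iff `Δ(a ⊔ b, a) ≤ b`. -/
def preceq (C : CubicAlgebra L) (a b : L) : Prop := C.delta (a ⊔ b) a ≤ b

/-- `a ≃ b` iff `Δ(a ⊔ b, a) = b`. -/
def csim (C : CubicAlgebra L) (a b : L) : Prop := C.delta (a ⊔ b) a = b

/-- The MR axiom: for `a, b < x`, `Δ(x,a) ⊔ b < x` iff `a ⊓ b` does not exist. -/
def IsMR (C : CubicAlgebra L) : Prop :=
  ∀ a b x : L, a < x → b < x → (C.delta x a ⊔ b < x ↔ ¬ MeetExists a b)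

/-- A filter: nonempty, upward closed, closed under existing binary meets. -/
def CFilter (F : Set L) : Prop :=
  F.Nonempty ∧ (∀ a b : L, a ∈ F → a ≤ b → b ∈ F) ∧
    (∀ a b m : L, a ∈ F → b ∈ F → IsGLB ({a, b} : Set L) m → m ∈ F)

/-- The filter generated by a set: intersection of all filters containing it. -/
def filterGen (S : Set L) : Set L := ⋂₀ {T : Set L | CFilter T ∧ S ⊆ T}

/-- The subalgebra generated by a filter `F`: `{Δ(x,y) : y ≤ x, x,y ∈ F}`. -/
def gen (C : CubicAlgebra L) (F : Set L) : Set L :=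
  {z : L | ∃ x ∈ F, ∃ y ∈ F, y ≤ x ∧ z = C.delta x y}

/-- `F_g = {Δ(g ⊔ f, f) : f ∈ F}`. -/
def shift (C : CubicAlgebra L) (F : Set L) (g : L) : Set L :=
  {z : L | ∃ f ∈ F, z = C.delta (g ⊔ f) f}

/-- For filters `A ⊆ B`, `A → B = {x ∈ B : ∀ a ∈ A, x ⊔ a = ⊤}`. -/
def arrow (A B : Set L) : Set L := {x : L | x ∈ B ∧ ∀ a ∈ A, x ⊔ a = ⊤}

/-- `Δ(G, F) = Δ(𝟏, G→F) ∨ G`, as a generated filter. -/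
def deltaF (C : CubicAlgebra L) (G F : Set L) : Set L :=
  filterGen ((C.delta ⊤ '' arrow G F) ∪ G)

/-- `G` is `F`-Boolean iff `G ∨ (G→F) = F`. -/
def FBoolean (F G : Set L) : Prop :=
  filterGen (G ∪ arrow G F) = F

end CubicAlgebra

end CubicPaper

namespace CubicPaper

namespace CubicAlgebra

variable {L : Type*} [SemilatticeSup L] [OrderTop L] (C : CubicAlgebra L)

/-- By (a), `s = Δ(s,m) ∨ m`, and by (d), `Δ(s,m) ≤ Δ(s,p)`. -/
theorem le_of_delta_le {m p s q : L} (hmp : m ≤ p) (hps : p ≤ s)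
    (hδ : C.delta s p ≤ q) (hmq : m ≤ q) : s ≤ q :=
  C.ax_a m s (hmp.trans hps) ▸ sup_le ((C.ax_d m p s hmp hps).trans hδ) hmq

theorem le_of_preceq_of_mem_lowerBounds {p q m : L} (h : C.preceq p q)
    (hm : m ∈ lowerBounds ({p, q} : Set L)) : p ≤ q :=
  le_sup_left.trans <|
    C.le_of_delta_le (hm (by simp)) le_sup_left h (hm (by simp))

end CubicAlgebra

open CubicAlgebra

theorem stmt0 {L : Type*} [SemilatticeSup L] [OrderTop L] (C : CubicAlgebra L)
    (p q : L) (h : C.preceq p q) (hm : MeetExists p q) : p ≤ q := by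
  obtain ⟨m, hglb⟩ := hm
  exact C.le_of_preceq_of_mem_lowerBounds h hglb.1

end CubicPaper
end

section
/- In a cubic algebra, if p ≃ q (i.e., Δ(p∨q, p) = q) and the meet p∧q exists, then p = q. -/
/-!
Put `s = p ⊔ q` and let `m = p ⊓ q`. Since `Δ(s, ·)` is an involution swapping `p` and `q`
and is monotone on the interval below `s`, it maps `m` below both `q` and `p`, hence below
`m`. An element `m ≤ s` with `Δ(s, m) ≤ m` is fixed by the involution, and then the axiom
`Δ(s, m) ∨ m = s` forces `m = s`, so `p = m = q`.
-/

namespace CubicPaper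

namespace CubicAlgebra

variable {L : Type*} [SemilatticeSup L] [OrderTop L] (C : CubicAlgebra L)

theorem csim_symm {p q : L} (h : C.csim p q) : C.csim q p := by
  have hinv := C.ax_c p (p ⊔ q) le_sup_left
  rw [h] at hinv
  rwa [csim, sup_comm]

theorem delta_eq_self_of_delta_le {m s : L} (hms : m ≤ s) (h : C.delta s m ≤ m) :
    C.delta s m = m := by
  refine le_antisymm h ?_
  have hmono := C.ax_d (C.delta s m) m s h hms
  rwa [C.ax_c m s hms] at hmono

theorem eq_of_delta_le {m s : L} (hms : m ≤ s) (h : C.delta s m ≤ m) : m = s := by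
  simpa [C.delta_eq_self_of_delta_le hms h] using C.ax_a m s hms

end CubicAlgebra

open CubicAlgebra

theorem stmt1 {L : Type*} [SemilatticeSup L] [OrderTop L] (C : CubicAlgebra L)
    (p q : L) (h : C.csim p q) (hm : MeetExists p q) : p = q := by
  obtain ⟨m, hglb⟩ := hm
  have hmp : m ≤ p := hglb.1 (by simp)
  have hmq : m ≤ q := hglb.1 (by simp)
  have hqp : C.delta (p ⊔ q) q = p := by
    simpa [csim, sup_comm] using C.csim_symm h
  have hdelta_le : C.delta (p ⊔ q) m ≤ m := by
    refine hglb.2 ?_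
    rintro x (rfl | rfl)
    · exact (C.ax_d m q (x ⊔ q) hmq le_sup_right).trans_eq hqp
    · exact (C.ax_d m p (p ⊔ x) hmp le_sup_left).trans_eq h
  have hm_top : m = p ⊔ q := C.eq_of_delta_le (hmp.trans le_sup_left) hdelta_le
  have hp : p = m := le_antisymm (hm_top ▸ le_sup_left) hmp
  have hq : q = m := le_antisymm (hm_top ▸ le_sup_right) hmq
  rw [hp, hq]

end CubicPaper
end

section
/- Let F be a filter of an MR-algebra and g ∈ F. Then the principal filter [g,𝟏] is F-Boolean, i.e., [g,𝟏] ∨ ([g,𝟏]→F) = F; equivalently every f ∈ F can be written as f = g' ∧ h with g' ≥ g and h ∈ F satisfying h∨k = 𝟏 for all k ≥ g. -/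
namespace CubicPaper
open CubicAlgebra

/-! For `f ∈ F` the element `g → f := op g f` lies in `[g, 𝟏] → F`, because
`g ⊔ (g → f) = 𝟏`, and `f` is the meet of `g ⊔ f ∈ [g, 𝟏]` and `g → f`. Both facts come
from the identity `Δ(𝟏, d) ⊔ d = 𝟏` for `d = Δ(a ⊔ b, b)`, together with the exchange
law `ax_f`. -/

namespace CubicAlgebra

variable {L : Type*} [SemilatticeSup L]

theorem filterGen_subset {S F : Set L} (hF : CFilter F) (hS : S ⊆ F) : filterGen S ⊆ F :=
  Set.sInter_subset_of_mem ⟨hF, hS⟩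

theorem mem_filterGen_of_isGLB {S : Set L} {a b m : L} (ha : a ∈ S) (hb : b ∈ S)
    (hm : IsGLB ({a, b} : Set L) m) : m ∈ filterGen S :=
  Set.mem_sInter.2 fun _ ⟨hT, hST⟩ => hT.2.2 a b m (hST ha) (hST hb) hm

variable [OrderTop L] (C : CubicAlgebra L)

theorem le_op_right (a b : L) : b ≤ C.op a b := by
  rw [C.op_def]
  exact le_sup_right

theorem eq_top_of_sup_le_of_op_le {a b c : L} (hab : a ⊔ b ≤ c) (hop : C.op a b ≤ c) :
    c = ⊤ := by
  set d := C.delta (a ⊔ b) b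
  have hd : d ≤ c := le_sup_left.trans ((C.ax_a b (a ⊔ b) le_sup_right).le.trans hab)
  have hΔd : C.delta ⊤ d ≤ c := le_sup_left.trans ((C.op_def a b).ge.trans hop)
  exact top_unique ((C.ax_a d ⊤ le_top).ge.trans (sup_le hΔd hd))

theorem op_eq_top_of_le {a b : L} (h : a ≤ b) : C.op a b = ⊤ :=
  C.eq_top_of_sup_le_of_op_le ((sup_eq_right.2 h).le.trans (C.le_op_right a b)) le_rfl

theorem op_top_left (b : L) : C.op ⊤ b = b := by
  rw [C.op_def, top_sup_eq, C.ax_c b ⊤ le_top, sup_idem]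

theorem le_of_op_eq_top {a b : L} (h : C.op a b = ⊤) : a ≤ b := by
  have := C.ax_e a b
  rw [h, op_top_left] at this
  exact le_sup_left.trans this.ge

theorem le_of_le_op {a b : L} (h : a ≤ C.op a b) : a ≤ b :=
  C.le_of_op_eq_top (C.eq_top_of_sup_le_of_op_le (sup_le h (C.le_op_right a b)) le_rfl)

theorem sup_op_eq_top (a b : L) : a ⊔ C.op a b = ⊤ :=
  C.eq_top_of_sup_le_of_op_le (sup_le_sup_left (C.le_op_right a b) a) le_sup_right

theorem le_of_le_of_le_op {x y z : L} (hyx : y ≤ x) (hzx : z ≤ x) (hz : z ≤ C.op x y) :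
    z ≤ y := by
  have hz' : z ⊔ y ≤ C.op x y := sup_le hz (C.le_op_right x y)
  have hx : x ≤ C.op (z ⊔ y) y := by
    apply C.le_of_op_eq_top
    rw [C.ax_f, C.op_eq_top_of_le hz']
  exact le_sup_left.trans (C.le_of_le_op ((sup_le hzx hyx).trans hx))

theorem isGLB_op {x y : L} (hyx : y ≤ x) : IsGLB ({x, C.op x y} : Set L) y := by
  refine ⟨?_, fun z hz =>
    C.le_of_le_of_le_op hyx (hz (Set.mem_insert _ _)) (hz (Set.mem_insert_of_mem _ rfl))⟩
  rintro a (rfl | rfl)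
  exacts [hyx, C.le_op_right _ _]

theorem op_sup_left (a b : L) : C.op (a ⊔ b) b = C.op a b := by
  rw [C.op_def, C.op_def, sup_assoc, sup_idem]

theorem op_mem_arrow_Ici {F : Set L} (hF : CFilter F) (g : L) {f : L} (hf : f ∈ F) :
    C.op g f ∈ arrow (Set.Ici g) F :=
  ⟨hF.2.1 f _ hf (C.le_op_right g f), fun _ hk => top_unique <| by
    rw [sup_comm, ← C.sup_op_eq_top g f]
    exact sup_le_sup_right hk _⟩

end CubicAlgebra

theorem stmt16_general {L : Type*} [SemilatticeSup L] [OrderTop L] (C : CubicAlgebra L)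
    (F : Set L) (hF : CFilter F) (g : L) (hg : g ∈ F) :
    FBoolean F (Set.Ici g) := by
  refine (filterGen_subset hF (Set.union_subset (fun x hx => hF.2.1 g x hg hx)
    fun x hx => hx.1)).antisymm fun f hf => ?_
  have hglb : IsGLB ({g ⊔ f, C.op g f} : Set L) f := by
    simpa only [op_sup_left] using C.isGLB_op (le_sup_right : f ≤ g ⊔ f)
  exact mem_filterGen_of_isGLB (Or.inl le_sup_left) (Or.inr (C.op_mem_arrow_Ici hF g hf)) hglb

theorem stmt16 {L : Type*} [SemilatticeSup L] [OrderTop L] (C : CubicAlgebra L)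
    (hMR : C.IsMR) (F : Set L) (hF : CFilter F) (g : L) (hg : g ∈ F) :
    FBoolean F (Set.Ici g) :=
  stmt16_general C F hF g hg

end CubicPaper
end
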